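/- arXiv:2007.10586 — 5 statements merged into one kernel-verified Lean document; each statement's English description precedes it below -/
import Mathlib

section
/- Let A and B be symmetric matrices of sizes l×l and p×p respectively, with A positive definite and B negative definite, and let C be an l×p matrix. Then the block matrix S = [[A, C],[Cᵀ, B]] is invertible. -/
/-!
Eliminating `C` below `A` gives `det S = det A * det (B - Cᴴ A⁻¹ C)`. The Schur complement
`B - Cᴴ A⁻¹ C` is negative definite, being the negative definite `B` minus the positive
semidefinite `Cᴴ A⁻¹ C`, so both determinants are nonzero.
-/

open Matrix
open scoped ComplexOrder

namespace Matrix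

variable {m n 𝕜 : Type*} [Fintype m] [Fintype n] [DecidableEq m] [RCLike 𝕜]

theorem neg_schurComplement_posDef {A : Matrix m m 𝕜} {B : Matrix n n 𝕜}
    (C : Matrix m n 𝕜) (hA : A.PosDef) (hB : (-B).PosDef) :
    (-(B - Cᴴ * A⁻¹ * C)).PosDef := by
  have hCAC : (Cᴴ * A⁻¹ * C).PosSemidef := hA.inv.posSemidef.conjTranspose_mul_mul_same C
  rw [neg_sub, sub_eq_neg_add]
  exact hB.add_posSemidef hCAC

theorem isUnit_fromBlocks_of_posDef_of_neg_posDef [DecidableEq n] {A : Matrix m m 𝕜}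
    {B : Matrix n n 𝕜} (C : Matrix m n 𝕜) (hA : A.PosDef) (hB : (-B).PosDef) :
    IsUnit (fromBlocks A C Cᴴ B) := by
  let := hA.isUnit.invertible
  have hSchur : IsUnit (B - Cᴴ * A⁻¹ * C) :=
    (IsUnit.neg_iff _).mp (neg_schurComplement_posDef C hA hB).isUnit
  rw [isUnit_iff_isUnit_det, det_fromBlocks₁₁, invOf_eq_nonsing_inv]
  exact (isUnit_iff_isUnit_det A).mp hA.isUnit |>.mul ((isUnit_iff_isUnit_det _).mp hSchur)

end Matrix

theorem block_matrix_invertible_general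
    {l p : ℕ} (A : Matrix (Fin l) (Fin l) ℝ) (B : Matrix (Fin p) (Fin p) ℝ)
    (C : Matrix (Fin l) (Fin p) ℝ)
    (hA : A.PosDef) (hB : (-B).PosDef) :
    IsUnit (Matrix.fromBlocks A C Cᵀ B) := by
  simpa only [conjTranspose_eq_transpose_of_trivial] using
    isUnit_fromBlocks_of_posDef_of_neg_posDef C hA hB

theorem block_matrix_invertible
    {l p : ℕ} (A : Matrix (Fin l) (Fin l) ℝ) (B : Matrix (Fin p) (Fin p) ℝ)
    (C : Matrix (Fin l) (Fin p) ℝ)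
    (hAs : A.IsSymm) (hBs : B.IsSymm)
    (hA : A.PosDef) (hB : (-B).PosDef) :
    IsUnit (Matrix.fromBlocks A C Cᵀ B) :=
  block_matrix_invertible_general A B C hA hB
end

section
/- For vectors a ∈ ℝ^l, b ∈ ℝ^p and the block matrix S = [[A, C],[Cᵀ, B]] with A positive definite and B negative definite invertible, the quadratic identity −bᵀ B⁻¹ b + (a,b)ᵀ S⁻¹ (a,b) = (a − C B⁻¹ b)ᵀ (A − C B⁻¹ Cᵀ)⁻¹ (a − C B⁻¹ b) holds. -/
/-!
Invert `S` through the Schur complement `Λ = A - C B⁻¹ Cᵀ` of its block `B`, which is positive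
definite (hence invertible) because `-B⁻¹` is. Expanding the quadratic form of the block inverse,
symmetry of `B⁻¹` merges the two cross terms, and the form becomes `bᵀ B⁻¹ b` plus the
quadratic form of `Λ⁻¹` at `a - C B⁻¹ b`: completing the square.
-/

open Matrix

namespace Matrix

variable {m n R : Type*} [Fintype m] [Fintype n] [DecidableEq n]

theorem inv_neg [CommRing R] (A : Matrix n n R) : (-A)⁻¹ = -A⁻¹ := by
  by_cases hA : IsUnit A.det
  · exact inv_eq_right_inv (by rw [neg_mul_neg, mul_nonsing_inv _ hA])
  · have hnA : ¬IsUnit (-A).det := fun h ↦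
      hA ((isUnit_iff_isUnit_det A).mp (by simpa using ((isUnit_iff_isUnit_det _).mpr h).neg))
    rw [nonsing_inv_apply_not_isUnit _ hA, nonsing_inv_apply_not_isUnit _ hnA, neg_zero]

theorem inv_fromBlocks₂₂_of_isUnit [DecidableEq m] [CommRing R] (A : Matrix m m R)
    (B : Matrix m n R) (C : Matrix n m R) (D : Matrix n n R) (hD : IsUnit D)
    (hS : IsUnit (A - B * D⁻¹ * C)) :
    (fromBlocks A B C D)⁻¹ =
      fromBlocks (A - B * D⁻¹ * C)⁻¹ (-((A - B * D⁻¹ * C)⁻¹ * B * D⁻¹))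
        (-(D⁻¹ * C * (A - B * D⁻¹ * C)⁻¹)) (D⁻¹ + D⁻¹ * C * (A - B * D⁻¹ * C)⁻¹ * B * D⁻¹) := by
  let := hD.invertible
  let : Invertible (A - B * ⅟D * C) := by rw [invOf_eq_nonsing_inv]; exact hS.invertible
  let := fromBlocks₂₂Invertible A B C D
  simp only [← invOf_eq_nonsing_inv, invOf_fromBlocks₂₂_eq]

theorem sumElim_dotProduct_inv_fromBlocks_mulVec_sumElim [DecidableEq m] [CommRing R]
    (A : Matrix m m R) (B : Matrix n n R) (C : Matrix m n R) (hBs : B.IsSymm) (hB : IsUnit B)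
    (hS : IsUnit (A - C * B⁻¹ * Cᵀ)) (a : m → R) (b : n → R) :
    Sum.elim a b ⬝ᵥ ((fromBlocks A C Cᵀ B)⁻¹ *ᵥ Sum.elim a b) =
      b ⬝ᵥ (B⁻¹ *ᵥ b) +
        (a - C *ᵥ (B⁻¹ *ᵥ b)) ⬝ᵥ ((A - C * B⁻¹ * Cᵀ)⁻¹ *ᵥ (a - C *ᵥ (B⁻¹ *ᵥ b))) := by
  rw [inv_fromBlocks₂₂_of_isUnit _ _ _ _ hB hS]
  simp only [fromBlocks_mulVec, sumElim_dotProduct_sumElim, add_mulVec, neg_mulVec,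
    ← mulVec_mulVec, dotProduct_add, dotProduct_neg, mulVec_sub, dotProduct_sub, sub_dotProduct,
    Sum.elim_comp_inl, Sum.elim_comp_inr]
  have hcross : ∀ v, b ⬝ᵥ (B⁻¹ *ᵥ (Cᵀ *ᵥ v)) = (C *ᵥ (B⁻¹ *ᵥ b)) ⬝ᵥ v := fun v ↦ by
    rw [dotProduct_mulVec, dotProduct_mulVec, vecMul_transpose, ← mulVec_transpose, hBs.inv.eq]
  rw [hcross, hcross]
  ring

theorem PosDef.sub_mul_inv_mul_conjTranspose {K : Type*} [Field K] [PartialOrder K]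
    [StarRing K] [AddLeftMono K] {A : Matrix m m K} {B : Matrix n n K} (hA : A.PosDef)
    (hB : (-B).PosDef) (C : Matrix m n K) : (A - C * B⁻¹ * Cᴴ).PosDef := by
  have hCBC : (C * (-B)⁻¹ * Cᴴ).PosSemidef := hB.inv.posSemidef.mul_mul_conjTranspose_same C
  rw [inv_neg, Matrix.mul_neg, Matrix.neg_mul] at hCBC
  simpa only [sub_eq_add_neg] using hA.add_posSemidef hCBC

end Matrix

theorem block_inverse_quadratic_identity_general
    {l p : ℕ} (A : Matrix (Fin l) (Fin l) ℝ) (B : Matrix (Fin p) (Fin p) ℝ)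
    (C : Matrix (Fin l) (Fin p) ℝ)
    (hA : A.PosDef) (hB : (-B).PosDef)
    (a : Fin l → ℝ) (b : Fin p → ℝ) :
    -(b ⬝ᵥ (B⁻¹ *ᵥ b))
      + (Sum.elim a b) ⬝ᵥ ((Matrix.fromBlocks A C Cᵀ B)⁻¹ *ᵥ Sum.elim a b)
    = (a - C *ᵥ (B⁻¹ *ᵥ b)) ⬝ᵥ ((A - C * B⁻¹ * Cᵀ)⁻¹ *ᵥ (a - C *ᵥ (B⁻¹ *ᵥ b))) := by
  have hBs : B.IsSymm := by simpa using (isHermitian_iff_isSymm.mp hB.isHermitian).neg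
  have hBu : IsUnit B := by simpa using hB.isUnit.neg
  have hS : (A - C * B⁻¹ * Cᵀ).PosDef := by
    simpa only [conjTranspose_eq_transpose_of_trivial] using hA.sub_mul_inv_mul_conjTranspose hB C
  rw [sumElim_dotProduct_inv_fromBlocks_mulVec_sumElim A B C hBs hBu hS.isUnit,
    neg_add_cancel_left]

theorem block_inverse_quadratic_identity
    {l p : ℕ} (A : Matrix (Fin l) (Fin l) ℝ) (B : Matrix (Fin p) (Fin p) ℝ)
    (C : Matrix (Fin l) (Fin p) ℝ)
    (hAs : A.IsSymm) (hBs : B.IsSymm)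
    (hA : A.PosDef) (hB : (-B).PosDef)
    (a : Fin l → ℝ) (b : Fin p → ℝ) :
    -(b ⬝ᵥ (B⁻¹ *ᵥ b))
      + (Sum.elim a b) ⬝ᵥ ((Matrix.fromBlocks A C Cᵀ B)⁻¹ *ᵥ Sum.elim a b)
    = (a - C *ᵥ (B⁻¹ *ᵥ b)) ⬝ᵥ ((A - C * B⁻¹ * Cᵀ)⁻¹ *ᵥ (a - C *ᵥ (B⁻¹ *ᵥ b))) :=
  block_inverse_quadratic_identity_general A B C hA hB a b
end

section
/- Let p : ι → ℝ be nonnegative weights summing to 1 over a finite index set, let q : ι → ℝ, and let S ⊆ ι be a subset such that S and its complement each contain an index with positive weight. Define A(θ) = ∑_{i∈S} p(i) exp(θ q(i)) and B(θ) = ∑_{i∉S} p(i) exp(θ q(i)). If q(i) < 0 for all i ∈ S with p(i) > 0 and q(i) > 0 for all i ∉ S with p(i) > 0, then the ratio θ ↦ A(θ)/B(θ) is strictly decreasing, tends to ∞ as θ → −∞, and tends to 0 as θ → ∞. -/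
/-!
Both `A` and `B` are nonnegative combinations of exponentials `θ ↦ exp (θ * q i)`. In `B` every
rate with positive weight is positive, so `B` increases strictly from `0` (at `-∞`) to `∞`
(at `∞`); reflecting `θ ↦ -θ` turns `A` into a sum of the same kind, so `A` decreases strictly
from `∞` to `0`. The ratio of a positive decreasing function by a positive increasing one then
has the claimed behaviour.
-/

open Filter Real Finset Topology

lemma StrictAnti.div_monotone {α 𝕜 : Type*} [Preorder α] [Field 𝕜] [LinearOrder 𝕜]
    [IsStrictOrderedRing 𝕜] {f g : α → 𝕜} (hf : StrictAnti f) (hg : Monotone g)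
    (hf₀ : ∀ x, 0 ≤ f x) (hg₀ : ∀ x, 0 < g x) : StrictAnti (f / g) :=
  fun _ _ h => div_lt_div₀ (hf h) (hg h.le) (hf₀ _) (hg₀ _)

section MulExpMul

variable {a b : ℝ}

lemma strictMono_mul_exp_mul (ha : 0 < a) (hb : 0 < b) :
    StrictMono fun θ => a * exp (θ * b) :=
  (exp_strictMono.comp (strictMono_mul_right_of_pos hb)).const_mul ha

lemma monotone_mul_exp_mul (ha : 0 ≤ a) (hb : 0 < a → 0 < b) :
    Monotone fun θ => a * exp (θ * b) := by
  rcases ha.eq_or_lt with rfl | ha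
  · simpa only [zero_mul] using monotone_const
  · exact (strictMono_mul_exp_mul ha (hb ha)).monotone

lemma tendsto_mul_exp_mul_atBot (ha : 0 ≤ a) (hb : 0 < a → 0 < b) :
    Tendsto (fun θ => a * exp (θ * b)) atBot (𝓝 0) := by
  rcases ha.eq_or_lt with rfl | ha
  · simpa only [zero_mul] using tendsto_const_nhds
  · simpa using (tendsto_exp_atBot.comp (tendsto_id.atBot_mul_const (hb ha))).const_mul a

end MulExpMul

section ExpSum

variable {ι : Type*} (s : Finset ι) (p q : ι → ℝ)

noncomputable def expSum (θ : ℝ) : ℝ := ∑ i ∈ s, p i * exp (θ * q i)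

lemma expSum_neg_comp_neg : expSum s p (-q) ∘ Neg.neg = expSum s p q := by
  ext θ
  simp only [Function.comp_apply, expSum, Pi.neg_apply, neg_mul_neg]

variable {s p q}

lemma expSum_pos (hp : ∀ i ∈ s, 0 ≤ p i) (hs : ∃ i ∈ s, 0 < p i) (θ : ℝ) :
    0 < expSum s p q θ :=
  let ⟨i, hi, hpi⟩ := hs
  sum_pos' (fun j hj => mul_nonneg (hp j hj) (exp_pos _).le) ⟨i, hi, mul_pos hpi (exp_pos _)⟩

variable (hp : ∀ i ∈ s, 0 ≤ p i) (hq : ∀ i ∈ s, 0 < p i → 0 < q i)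
include hp hq

lemma strictMono_expSum (hs : ∃ i ∈ s, 0 < p i) : StrictMono (expSum s p q) := by
  obtain ⟨i, hi, hpi⟩ := hs
  intro x y hxy
  exact sum_lt_sum (fun j hj => monotone_mul_exp_mul (hp j hj) (hq j hj) hxy.le)
    ⟨i, hi, strictMono_mul_exp_mul hpi (hq i hi hpi) hxy⟩

lemma tendsto_expSum_atTop (hs : ∃ i ∈ s, 0 < p i) : Tendsto (expSum s p q) atTop atTop := by
  obtain ⟨i, hi, hpi⟩ := hs
  have hterm : Tendsto (fun θ => p i * exp (θ * q i)) atTop atTop :=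
    (tendsto_exp_atTop.comp (tendsto_id.atTop_mul_const (hq i hi hpi))).const_mul_atTop hpi
  refine tendsto_atTop_mono (fun θ => ?_) hterm
  exact single_le_sum (f := fun j => p j * exp (θ * q j))
    (fun j hj => mul_nonneg (hp j hj) (exp_pos _).le) hi

lemma tendsto_expSum_atBot : Tendsto (expSum s p q) atBot (𝓝 0) := by
  have h := tendsto_finsetSum s fun i hi => tendsto_mul_exp_mul_atBot (hp i hi) (hq i hi)
  rwa [sum_const_zero] at h

end ExpSum

theorem weighted_exp_ratio_strict_anti_and_limits_general
    {ι : Type*} [Fintype ι] [DecidableEq ι]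
    (p q : ι → ℝ) (S : Finset ι)
    (hp : ∀ i, 0 ≤ p i)
    (hqS : ∀ i ∈ S, 0 < p i → q i < 0)
    (hqSc : ∀ i ∈ Sᶜ, 0 < p i → 0 < q i)
    (hS : ∃ i ∈ S, 0 < p i) (hSc : ∃ i ∈ Sᶜ, 0 < p i) :
    StrictAnti (fun θ : ℝ =>
        (∑ i ∈ S, p i * Real.exp (θ * q i)) / (∑ i ∈ Sᶜ, p i * Real.exp (θ * q i)))
    ∧ Tendsto (fun θ : ℝ =>
        (∑ i ∈ S, p i * Real.exp (θ * q i)) / (∑ i ∈ Sᶜ, p i * Real.exp (θ * q i)))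
        atBot atTop
    ∧ Tendsto (fun θ : ℝ =>
        (∑ i ∈ S, p i * Real.exp (θ * q i)) / (∑ i ∈ Sᶜ, p i * Real.exp (θ * q i)))
        atTop (nhds 0) := by
  have hpS : ∀ i ∈ S, 0 ≤ p i := fun i _ => hp i
  have hpSc : ∀ i ∈ Sᶜ, 0 ≤ p i := fun i _ => hp i
  have hqS' : ∀ i ∈ S, 0 < p i → 0 < (-q) i := fun i hi h => neg_pos.2 (hqS i hi h)
  have hA := expSum_neg_comp_neg S p q
  have hAanti : StrictAnti (expSum S p q) :=
    hA ▸ (strictMono_expSum hpS hqS' hS).comp_strictAnti fun _ _ => neg_lt_neg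
  have hAtop : Tendsto (expSum S p q) atBot atTop :=
    hA ▸ (tendsto_expSum_atTop hpS hqS' hS).comp tendsto_neg_atBot_atTop
  have hAzero : Tendsto (expSum S p q) atTop (𝓝 0) :=
    hA ▸ (tendsto_expSum_atBot hpS hqS').comp tendsto_neg_atTop_atBot
  have hBpos := expSum_pos (q := q) hpSc hSc
  have hBzero : Tendsto (expSum Sᶜ p q) atBot (𝓝[>] 0) :=
    tendsto_nhdsWithin_iff.2 ⟨tendsto_expSum_atBot hpSc hqSc, .of_forall hBpos⟩
  refine ⟨hAanti.div_monotone (strictMono_expSum hpSc hqSc hSc).monotone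
      (fun θ => (expSum_pos hpS hS θ).le) hBpos, ?_,
    hAzero.div_atTop (tendsto_expSum_atTop hpSc hqSc hSc)⟩
  simpa only [div_eq_mul_inv, Pi.inv_apply, expSum] using
    hAtop.atTop_mul_atTop₀ hBzero.inv_tendsto_nhdsGT_zero

theorem weighted_exp_ratio_strict_anti_and_limits
    {ι : Type*} [Fintype ι] [DecidableEq ι]
    (p q : ι → ℝ) (S : Finset ι)
    (hp : ∀ i, 0 ≤ p i) (hsum : ∑ i, p i = 1)
    (hqS : ∀ i ∈ S, 0 < p i → q i < 0)
    (hqSc : ∀ i ∈ Sᶜ, 0 < p i → 0 < q i)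
    (hS : ∃ i ∈ S, 0 < p i) (hSc : ∃ i ∈ Sᶜ, 0 < p i) :
    StrictAnti (fun θ : ℝ =>
        (∑ i ∈ S, p i * Real.exp (θ * q i)) / (∑ i ∈ Sᶜ, p i * Real.exp (θ * q i)))
    ∧ Tendsto (fun θ : ℝ =>
        (∑ i ∈ S, p i * Real.exp (θ * q i)) / (∑ i ∈ Sᶜ, p i * Real.exp (θ * q i)))
        atBot atTop
    ∧ Tendsto (fun θ : ℝ =>
        (∑ i ∈ S, p i * Real.exp (θ * q i)) / (∑ i ∈ Sᶜ, p i * Real.exp (θ * q i)))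
        atTop (nhds 0) :=
  weighted_exp_ratio_strict_anti_and_limits_general p q S hp hqS hqSc hS hSc
end

section
/- Under the setup of the preceding monotone ratio lemma, for every τ ∈ (0,1) there exists θ* ∈ ℝ such that A(θ*)/B(θ*) = τ/(1−τ). Consequently, setting c = −log(A(θ*) + B(θ*)), the weights p(i)·exp(c + θ*·q(i)) sum to 1 over ι and the sum over S equals τ. -/
/-!
With `A θ = ∑_{i ∈ S} p i e^{θ q i}` and `B θ = ∑_{i ∉ S} p i e^{θ q i}`, the sign conditions on `q`
make `A` blow up and `B` vanish as `θ → -∞`, and the reverse as `θ → +∞`. Hence the continuous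
function `(1 - τ) A - τ B` runs from `+∞` to `-∞` and has a zero `θ*`, where `A / B = τ / (1 - τ)`.
Dividing the weights `p i e^{θ* q i}` by their total `A + B = e^{-c}` then gives total mass `1`
and mass `A / (A + B) = τ` on `S`.
-/

open Real Filter Topology

section TiltedMass

variable {ι : Type*} (p q : ι → ℝ) (s : Finset ι)

noncomputable def tiltedMass (θ : ℝ) : ℝ := ∑ i ∈ s, p i * exp (θ * q i)

variable {p q s}

theorem continuous_tiltedMass : Continuous (tiltedMass p q s) := by
  unfold tiltedMass
  fun_prop

theorem tiltedMass_pos (hp : ∀ i, 0 ≤ p i) {i : ι} (hi : i ∈ s) (hpi : 0 < p i) (θ : ℝ) :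
    0 < tiltedMass p q s θ :=
  Finset.sum_pos' (fun j _ => mul_nonneg (hp j) (exp_pos _).le)
    ⟨i, hi, mul_pos hpi (exp_pos _)⟩

theorem tendsto_tiltedMass_zero {l : Filter ℝ} (hp : ∀ i, 0 ≤ p i)
    (h : ∀ i ∈ s, 0 < p i → Tendsto (fun θ => θ * q i) l atBot) :
    Tendsto (tiltedMass p q s) l (𝓝 0) := by
  rw [← Finset.sum_const_zero (s := s)]
  refine tendsto_finsetSum s fun i hi => ?_
  rcases (hp i).eq_or_lt with hpi | hpi
  · simpa [← hpi] using tendsto_const_nhds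
  · simpa using ((tendsto_exp_atBot.comp (h i hi hpi)).const_mul (p i))

theorem tendsto_tiltedMass_atTop {l : Filter ℝ} (hp : ∀ i, 0 ≤ p i) {i : ι} (hi : i ∈ s)
    (hpi : 0 < p i) (h : Tendsto (fun θ => θ * q i) l atTop) :
    Tendsto (tiltedMass p q s) l atTop :=
  tendsto_atTop_mono
    (fun θ => Finset.single_le_sum (f := fun j => p j * exp (θ * q j))
      (fun j _ => mul_nonneg (hp j) (exp_pos _).le) hi)
    ((tendsto_exp_atTop.comp h).const_mul_atTop hpi)

end TiltedMass

theorem exists_one_sub_mul_eq_mul {A B : ℝ → ℝ} (hA : Continuous A) (hB : Continuous B)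
    (hA_bot : Tendsto A atBot atTop) (hB_bot : Tendsto B atBot (𝓝 0))
    (hA_top : Tendsto A atTop (𝓝 0)) (hB_top : Tendsto B atTop atTop)
    {τ : ℝ} (hτ : τ ∈ Set.Ioo (0 : ℝ) 1) :
    ∃ θ, (1 - τ) * A θ = τ * B θ := by
  obtain ⟨hτ0, hτ1⟩ := hτ
  have h_bot : Tendsto (fun θ => (1 - τ) * A θ - τ * B θ) atBot atTop := by
    simpa [sub_eq_add_neg] using
      (hA_bot.const_mul_atTop (sub_pos.2 hτ1)).atTop_add (hB_bot.const_mul τ).neg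
  have h_top : Tendsto (fun θ => (1 - τ) * A θ - τ * B θ) atTop atBot := by
    simpa [sub_eq_add_neg, neg_mul] using
      (hA_top.const_mul (1 - τ)).add_atBot (hB_top.const_mul_atTop_of_neg (neg_neg_of_pos hτ0))
  obtain ⟨θ, hθ⟩ := ((continuous_const.mul hA).sub (continuous_const.mul hB)).surjective'
    h_bot h_top 0
  exact ⟨θ, sub_eq_zero.1 hθ⟩

theorem sum_mul_exp_neg_log_add {ι : Type*} (s : Finset ι) (p x : ι → ℝ) {Z : ℝ} (hZ : 0 < Z) :
    ∑ i ∈ s, p i * exp (-log Z + x i) = (∑ i ∈ s, p i * exp (x i)) / Z := by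
  simp_rw [exp_add, exp_neg, exp_log hZ, Finset.sum_div]
  exact Finset.sum_congr rfl fun i _ => by field_simp

theorem exists_theta_star_matching_quantile_ratio_general
    {ι : Type*} [Fintype ι] [DecidableEq ι]
    (p q : ι → ℝ) (S : Finset ι)
    (hp : ∀ i, 0 ≤ p i)
    (hqS : ∀ i ∈ S, 0 < p i → q i < 0)
    (hqSc : ∀ i ∈ Sᶜ, 0 < p i → 0 < q i)
    (hS : ∃ i ∈ S, 0 < p i) (hSc : ∃ i ∈ Sᶜ, 0 < p i)
    (τ : ℝ) (hτ : τ ∈ Set.Ioo (0 : ℝ) 1) :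
    ∃ θ : ℝ,
      (∑ i ∈ S, p i * Real.exp (θ * q i)) / (∑ i ∈ Sᶜ, p i * Real.exp (θ * q i))
          = τ / (1 - τ)
      ∧ (∑ i, p i * Real.exp
            (-Real.log ((∑ j ∈ S, p j * Real.exp (θ * q j))
                + ∑ j ∈ Sᶜ, p j * Real.exp (θ * q j)) + θ * q i)) = 1
      ∧ (∑ i ∈ S, p i * Real.exp
            (-Real.log ((∑ j ∈ S, p j * Real.exp (θ * q j))
                + ∑ j ∈ Sᶜ, p j * Real.exp (θ * q j)) + θ * q i)) = τ := by
  obtain ⟨i₁, hi₁, hpi₁⟩ := hS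
  obtain ⟨i₀, hi₀, hpi₀⟩ := hSc
  obtain ⟨θ, hθ⟩ := exists_one_sub_mul_eq_mul (τ := τ) (continuous_tiltedMass (s := S))
    (continuous_tiltedMass (s := Sᶜ))
    (tendsto_tiltedMass_atTop hp hi₁ hpi₁ (tendsto_id.atBot_mul_const_of_neg (hqS i₁ hi₁ hpi₁)))
    (tendsto_tiltedMass_zero hp fun i hi hpi => tendsto_id.atBot_mul_const (hqSc i hi hpi))
    (tendsto_tiltedMass_zero hp fun i hi hpi => tendsto_id.atTop_mul_const_of_neg (hqS i hi hpi))
    (tendsto_tiltedMass_atTop hp hi₀ hpi₀ (tendsto_id.atTop_mul_const (hqSc i₀ hi₀ hpi₀))) hτ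
  have hA := tiltedMass_pos (q := q) hp hi₁ hpi₁ θ
  have hB := tiltedMass_pos (q := q) hp hi₀ hpi₀ θ
  have hτ1 : 1 - τ ≠ 0 := (sub_pos.2 hτ.2).ne'
  unfold tiltedMass at hθ hA hB
  refine ⟨θ, ?_, ?_, ?_⟩
  · rw [div_eq_div_iff hB.ne' hτ1]
    linarith
  · rw [sum_mul_exp_neg_log_add _ _ _ (add_pos hA hB), ← Finset.sum_add_sum_compl S]
    exact div_self (add_pos hA hB).ne'
  · rw [sum_mul_exp_neg_log_add _ _ _ (add_pos hA hB), div_eq_iff (add_pos hA hB).ne']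
    linarith

theorem exists_theta_star_matching_quantile_ratio
    {ι : Type*} [Fintype ι] [DecidableEq ι]
    (p q : ι → ℝ) (S : Finset ι)
    (hp : ∀ i, 0 ≤ p i) (hsum : ∑ i, p i = 1)
    (hqS : ∀ i ∈ S, 0 < p i → q i < 0)
    (hqSc : ∀ i ∈ Sᶜ, 0 < p i → 0 < q i)
    (hS : ∃ i ∈ S, 0 < p i) (hSc : ∃ i ∈ Sᶜ, 0 < p i)
    (τ : ℝ) (hτ : τ ∈ Set.Ioo (0 : ℝ) 1) :
    ∃ θ : ℝ,
      (∑ i ∈ S, p i * Real.exp (θ * q i)) / (∑ i ∈ Sᶜ, p i * Real.exp (θ * q i))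
          = τ / (1 - τ)
      ∧ (∑ i, p i * Real.exp
            (-Real.log ((∑ j ∈ S, p j * Real.exp (θ * q j))
                + ∑ j ∈ Sᶜ, p j * Real.exp (θ * q j)) + θ * q i)) = 1
      ∧ (∑ i ∈ S, p i * Real.exp
            (-Real.log ((∑ j ∈ S, p j * Real.exp (θ * q j))
                + ∑ j ∈ Sᶜ, p j * Real.exp (θ * q j)) + θ * q i)) = τ :=
  exists_theta_star_matching_quantile_ratio_general p q S hp hqS hqSc hS hSc τ hτ
end

section
/- Let S be an invertible symmetric block matrix with blocks S_λλ, S_λθ, S_θλ = S_λθᵀ, S_θθ, where S_λλ is positive definite and S_θθ is negative definite, and let W be a positive semidefinite matrix acting only on the θ-block (i.e., W = diag(0, W₀) with W₀ psd). Define V = diag(S_λλ, −S_θθ) − S W S and D = [I, −S_λθ S_θθ⁻¹]. Then D V Dᵀ = S_λλ − S_λθ S_θθ⁻¹ S_λθᵀ. -/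
/-!
Left multiplication by `D = [I, -S_λθ S_θθ⁻¹]` is one step of block Gaussian elimination:
`D S = [Λ, 0]` with `Λ` the Schur complement of `S_θθ`. Since `W` only acts on the θ-block,
`D S W = 0`, so the sandwich term of `V` vanishes and `D V Dᵀ = D diag(S_λλ, -S_θθ) Dᵀ`,
which expands to `S_λλ - S_λθ S_θθ⁻¹ S_λθᵀ` by symmetry of `S_θθ`.
-/

open Matrix

section BlockElimination

variable {l m n R : Type*} [Fintype m] [Fintype n] [CommRing R]

theorem fromCols_zero_mul_fromBlocks_zero_zero_zero (X : Matrix l m R) (W : Matrix n n R) :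
    Matrix.fromCols X (0 : Matrix l n R) * fromBlocks (0 : Matrix m m R) 0 0 W = 0 := by
  simp [fromCols_mul_fromBlocks]

variable [DecidableEq m] [DecidableEq n]

theorem fromCols_one_neg_mul_inv_mul_fromBlocks (A : Matrix m m R) (B : Matrix m n R)
    (C : Matrix n m R) (D : Matrix n n R) (hD : IsUnit D.det) :
    Matrix.fromCols (1 : Matrix m m R) (-(B * D⁻¹)) * fromBlocks A B C D =
      Matrix.fromCols (A - B * D⁻¹ * C) 0 := by
  rw [fromCols_mul_fromBlocks]
  simp only [Matrix.one_mul, Matrix.neg_mul, Matrix.mul_assoc, nonsing_inv_mul _ hD,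
    Matrix.mul_one, add_neg_cancel, sub_eq_add_neg]

theorem fromCols_one_neg_mul_inv_mul_fromBlocks_zero_zero_neg_mul_transpose (A : Matrix m m R)
    (B : Matrix m n R) (D : Matrix n n R) (hDs : D.IsSymm) (hD : IsUnit D.det) :
    Matrix.fromCols (1 : Matrix m m R) (-(B * D⁻¹)) * fromBlocks A 0 0 (-D) *
        (Matrix.fromCols (1 : Matrix m m R) (-(B * D⁻¹)))ᵀ = A - B * D⁻¹ * Bᵀ := by
  have hDinvT : (D⁻¹)ᵀ = D⁻¹ := by rw [transpose_nonsing_inv, hDs.eq]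
  rw [fromCols_mul_fromBlocks, transpose_fromCols, fromCols_mul_fromRows]
  simp only [Matrix.one_mul, Matrix.mul_zero, Matrix.mul_one, add_zero, zero_add,
    transpose_one, transpose_neg, transpose_mul, hDinvT, Matrix.mul_neg, Matrix.neg_mul, neg_neg,
    Matrix.mul_assoc]
  rw [← Matrix.mul_assoc D, mul_nonsing_inv _ hD, Matrix.one_mul, sub_eq_add_neg]

end BlockElimination

theorem DVD_transpose_eq_schur_complement_general
    {l p : ℕ}
    (Sll : Matrix (Fin l) (Fin l) ℝ) (Slt : Matrix (Fin l) (Fin p) ℝ)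
    (Stt : Matrix (Fin p) (Fin p) ℝ) (W₀ : Matrix (Fin p) (Fin p) ℝ)
    (hStts : Stt.IsSymm)
    (hStt : (-Stt).PosDef)
    (S : Matrix (Fin l ⊕ Fin p) (Fin l ⊕ Fin p) ℝ)
    (hS : S = Matrix.fromBlocks Sll Slt Sltᵀ Stt)
    (W V : Matrix (Fin l ⊕ Fin p) (Fin l ⊕ Fin p) ℝ)
    (hW : W = Matrix.fromBlocks 0 0 0 W₀)
    (hV : V = Matrix.fromBlocks Sll 0 0 (-Stt) - S * W * S)
    (D : Matrix (Fin l) (Fin l ⊕ Fin p) ℝ)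
    (hD : D = Matrix.fromCols 1 (-(Slt * Stt⁻¹))) :
    D * V * Dᵀ = Sll - Slt * Stt⁻¹ * Sltᵀ := by
  have hSttu : IsUnit Stt.det := (isUnit_iff_isUnit_det _).mp (by simpa using hStt.isUnit.neg)
  have hDSW : D * S * W = 0 := by
    rw [hD, hS, hW, fromCols_one_neg_mul_inv_mul_fromBlocks _ _ _ _ hSttu,
      fromCols_zero_mul_fromBlocks_zero_zero_zero]
  calc D * V * Dᵀ = D * fromBlocks Sll 0 0 (-Stt) * Dᵀ - D * S * W * S * Dᵀ := by
        rw [hV, Matrix.mul_sub, Matrix.sub_mul]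
        simp only [Matrix.mul_assoc]
    _ = Sll - Slt * Stt⁻¹ * Sltᵀ := by
        rw [hDSW, Matrix.zero_mul, Matrix.zero_mul, sub_zero, hD,
          fromCols_one_neg_mul_inv_mul_fromBlocks_zero_zero_neg_mul_transpose _ _ _ hStts hSttu]

theorem DVD_transpose_eq_schur_complement
    {l p : ℕ}
    (Sll : Matrix (Fin l) (Fin l) ℝ) (Slt : Matrix (Fin l) (Fin p) ℝ)
    (Stt : Matrix (Fin p) (Fin p) ℝ) (W₀ : Matrix (Fin p) (Fin p) ℝ)
    (hSlls : Sll.IsSymm) (hStts : Stt.IsSymm)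
    (hSll : Sll.PosDef) (hStt : (-Stt).PosDef) (hW₀ : W₀.PosSemidef)
    (S : Matrix (Fin l ⊕ Fin p) (Fin l ⊕ Fin p) ℝ)
    (hS : S = Matrix.fromBlocks Sll Slt Sltᵀ Stt)
    (hSu : IsUnit S.det)
    (W V : Matrix (Fin l ⊕ Fin p) (Fin l ⊕ Fin p) ℝ)
    (hW : W = Matrix.fromBlocks 0 0 0 W₀)
    (hV : V = Matrix.fromBlocks Sll 0 0 (-Stt) - S * W * S)
    (D : Matrix (Fin l) (Fin l ⊕ Fin p) ℝ)
    (hD : D = Matrix.fromCols 1 (-(Slt * Stt⁻¹))) :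
    D * V * Dᵀ = Sll - Slt * Stt⁻¹ * Sltᵀ :=
  DVD_transpose_eq_schur_complement_general Sll Slt Stt W₀ hStts hStt S hS W V hW hV D hD
end
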